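/- arXiv:2411.11587 — 8 statements merged into one kernel-verified Lean document; each statement's English description precedes it below -/
import Mathlib

section
/- Let |·| be a norm on ℝⁿ with induced logarithmic norm μ, let Ω ⊆ ℝⁿˣⁿ be a set of matrices, and let c ∈ ℝ satisfy μ(M) ≤ c for all M ∈ Ω. Then every trajectory x of the linear differential inclusion ẋ ∈ Ωx defined on [t₀, T] satisfies |x(t)| ≤ e^{c(t−t₀)} |x(t₀)| for every t ∈ [t₀, T]. -/
open Filter Topology Set Matrix

/-- `N` is a norm on `ℝⁿ`. -/
def IsNorm {n : ℕ} (N : (Fin n → ℝ) → ℝ) : Prop :=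
  (∀ x y, N (x + y) ≤ N x + N y) ∧
  (∀ (a : ℝ) (x : Fin n → ℝ), N (a • x) = |a| * N x) ∧
  (∀ x, N x = 0 → x = 0)

/-- The operator norm on `ℝⁿˣⁿ` induced by the norm `N`. -/
noncomputable def opNorm {n : ℕ} (N : (Fin n → ℝ) → ℝ) (A : Matrix (Fin n) (Fin n) ℝ) : ℝ :=
  sSup ((fun x => N (A.mulVec x)) '' {x | N x = 1})

/-- The logarithmic norm `μ(A) = lim_{h → 0⁺} (‖I + hA‖ - 1)/h` induced by the norm `N`. -/
noncomputable def logNorm {n : ℕ} (N : (Fin n → ℝ) → ℝ) (A : Matrix (Fin n) (Fin n) ℝ) : ℝ :=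
  limUnder (𝓝[>] (0 : ℝ)) (fun h => (opNorm N (1 + h • A) - 1) / h)

/-!
On a type synonym of `ℝⁿ`, `N` is a genuine norm and `opNorm N A` the operator norm of the
continuous linear map `A`, so everything happens in a real normed space. There the function
`h ↦ ‖1 + h • A‖` is convex with value `1` at `0`, so the difference quotient defining the
logarithmic norm is monotone in `h > 0` and bounded below by `-‖A‖`; hence it converges.
Along a trajectory, `x (t + h) = (1 + h • A) x t + o(h)`, so the upper right Dini derivative
of `‖x‖` is at most `μ(A) ‖x‖ ≤ c ‖x‖`. Comparison with `exp ((c + ε) (t - s)) (‖x s‖ + ε)` on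
`[s, T]`, followed by `ε → 0` and `s → t₀`, gives the bound.
-/

namespace ContinuousLinearMap

variable {E : Type*} [NormedAddCommGroup E] [NormedSpace ℝ E]

noncomputable def logNorm (A : E →L[ℝ] E) : ℝ :=
  limUnder (𝓝[>] (0 : ℝ)) fun h => (‖1 + h • A‖ - 1) / h

theorem convexOn_norm_one_add_smul (A : E →L[ℝ] E) :
    ConvexOn ℝ univ fun h : ℝ => ‖1 + h • A‖ := by
  refine ⟨convex_univ, fun x _ y _ a b ha hb hab => ?_⟩
  have hsplit : 1 + (a • x + b • y) • A = a • (1 + x • A) + b • (1 + y • A) := by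
    rw [smul_add, smul_add, smul_smul, smul_smul, add_add_add_comm, ← add_smul, hab, one_smul,
      ← add_smul, smul_eq_mul, smul_eq_mul, add_smul]
  simp only [smul_eq_mul] at hsplit ⊢
  rw [hsplit]
  refine (norm_add_le _ _).trans ?_
  rw [norm_smul, norm_smul, Real.norm_of_nonneg ha, Real.norm_of_nonneg hb]

theorem norm_le_norm_one_add_smul_mul_add (A : E →L[ℝ] E) (v w : E) (h : ℝ) :
    ‖v + h • A v + w‖ ≤ ‖1 + h • A‖ * ‖v‖ + ‖w‖ := by
  refine (norm_add_le _ _).trans (add_le_add_left ?_ _)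
  simpa using (1 + h • A).le_opNorm v

variable [Nontrivial E]

theorem neg_norm_le_logNorm_quotient (A : E →L[ℝ] E) {h : ℝ} (hh : 0 < h) :
    -‖A‖ ≤ (‖1 + h • A‖ - 1) / h := by
  have h1 : 1 ≤ ‖1 + h • A‖ + h * ‖A‖ := by
    calc (1 : ℝ) = ‖(1 + h • A) - h • A‖ := by rw [add_sub_cancel_right, norm_one]
      _ ≤ ‖1 + h • A‖ + ‖h • A‖ := norm_sub_le _ _
      _ = ‖1 + h • A‖ + h * ‖A‖ := by rw [norm_smul, Real.norm_of_nonneg hh.le]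
  rw [le_div_iff₀ hh]
  linarith

theorem tendsto_logNorm (A : E →L[ℝ] E) :
    Tendsto (fun h => (‖1 + h • A‖ - 1) / h) (𝓝[>] 0) (𝓝 A.logNorm) := by
  have hmono : MonotoneOn (fun h : ℝ => (‖1 + h • A‖ - 1) / h) (Ioi 0) := fun x hx y hy hxy => by
    simpa using (convexOn_norm_one_add_smul A).secant_mono (a := 0) trivial trivial trivial
      hx.ne' hy.ne' hxy
  have hbdd : BddBelow ((fun h : ℝ => (‖1 + h • A‖ - 1) / h) '' Ioi 0) := by
    refine ⟨-‖A‖, ?_⟩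
    rintro _ ⟨h, hh, rfl⟩
    exact neg_norm_le_logNorm_quotient A hh
  have hlim := hmono.tendsto_nhdsGT hbdd
  rwa [logNorm, hlim.limUnder_eq]

theorem eventually_slope_norm_lt {x : ℝ → E} {A : E →L[ℝ] E} {t r : ℝ}
    (hx : HasDerivAt x (A (x t)) t) (hr : A.logNorm * ‖x t‖ < r) :
    ∀ᶠ z in 𝓝[>] t, slope (norm ∘ x) t z < r := by
  set err : ℝ → E := fun z => x z - x t - (z - t) • A (x t)
  have hshift : Tendsto (fun z => z - t) (𝓝[>] t) (𝓝[>] 0) := by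
    refine tendsto_nhdsWithin_iff.2
      ⟨?_, eventually_mem_nhdsWithin.mono fun z hz => mem_Ioi.2 (sub_pos.2 hz)⟩
    simpa using ((continuous_sub_right t).tendsto t).mono_left nhdsWithin_le_nhds
  have herr : Tendsto (fun z => ‖err z‖ / (z - t)) (𝓝[>] t) (𝓝 0) :=
    ((hasDerivAt_iff_isLittleO.1 hx).norm_left.tendsto_div_nhds_zero).mono_left
      nhdsWithin_le_nhds
  have hbound : Tendsto (fun z => (‖1 + (z - t) • A‖ - 1) / (z - t) * ‖x t‖ + ‖err z‖ / (z - t))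
      (𝓝[>] t) (𝓝 (A.logNorm * ‖x t‖ + 0)) :=
    (((tendsto_logNorm A).comp hshift).mul_const _).add herr
  filter_upwards [hbound.eventually_lt_const (by simpa using hr), self_mem_nhdsWithin]
    with z hz hzt
  refine lt_of_le_of_lt ?_ hz
  have hzt' : 0 < z - t := sub_pos.2 hzt
  have hxz : x z = x t + (z - t) • A (x t) + err z := by simp [err]
  rw [slope_def_field, Function.comp_apply, Function.comp_apply, div_mul_eq_mul_div, ← add_div,
    div_le_div_iff_of_pos_right hzt', hxz]
  linarith [norm_le_norm_one_add_smul_mul_add A (x t) (err z) (z - t)]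

end ContinuousLinearMap

section Gronwall

variable {E : Type*} [NormedAddCommGroup E]

theorem norm_le_exp_mul_of_liminf_slope_norm_le {x : ℝ → E} {a b c : ℝ}
    (hx : ContinuousOn x (Icc a b))
    (hslope : ∀ u ∈ Ico a b, ∀ r, c * ‖x u‖ < r → ∃ᶠ z in 𝓝[>] u, slope (norm ∘ x) u z < r) :
    ∀ t ∈ Icc a b, ‖x t‖ ≤ Real.exp (c * (t - a)) * ‖x a‖ := by
  intro t ht
  set B : ℝ → ℝ → ℝ := fun ε u => Real.exp ((c + ε) * (u - a)) * (‖x a‖ + ε)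
  have hB : ∀ ε > 0, ‖x t‖ ≤ B ε t := fun ε hε => by
    have hB_pos : ∀ u, 0 < B ε u := fun u => by positivity
    refine image_norm_le_of_liminf_right_slope_norm_lt_deriv_boundary hx hslope
      (by simp [B, hε.le]) (by fun_prop) (B' := fun u => (c + ε) * B ε u) (fun u _ => ?_)
      (fun u _ hu => by rw [hu]; nlinarith [mul_pos hε (hB_pos u)]) ht
    have := (((hasDerivAt_id u).sub_const a).const_mul (c + ε)).exp.mul_const (‖x a‖ + ε)
    exact (this.congr_deriv (by simp only [id_eq, mul_one, B]; ring)).hasDerivWithinAt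
  have hB_cont : ContinuousWithinAt (fun ε => B ε t) (Ioi 0) 0 := by fun_prop
  simpa [B] using continuousWithinAt_const.closure_le (by simp) hB_cont hB

theorem norm_le_exp_mul_of_hasDerivAt_of_logNorm_le [NormedSpace ℝ E] {x : ℝ → E} {c t₀ T : ℝ}
    (hxc : ContinuousOn x (Icc t₀ T))
    (hxd : ∀ t ∈ Ioo t₀ T, ∃ A : E →L[ℝ] E, A.logNorm ≤ c ∧ HasDerivAt x (A (x t)) t) :
    ∀ t ∈ Icc t₀ T, ‖x t‖ ≤ Real.exp (c * (t - t₀)) * ‖x t₀‖ := by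
  rcases subsingleton_or_nontrivial E with hE | hE
  · intro t _
    simp only [Subsingleton.elim (x t) 0, norm_zero]
    positivity
  intro t ht
  rcases ht.1.eq_or_lt with rfl | ht₀
  · simp
  -- on `[s, t]` with `s > t₀` the derivative exists at the left endpoint too
  have hs : ∀ s ∈ Ioc t₀ t, ‖x t‖ ≤ Real.exp (c * (t - s)) * ‖x s‖ := fun s hs =>
    norm_le_exp_mul_of_liminf_slope_norm_le (hxc.mono (Icc_subset_Icc hs.1.le ht.2))
      (fun u hu r hr => by
        obtain ⟨A, hA, hxA⟩ := hxd u ⟨hs.1.trans_le hu.1, hu.2.trans_le ht.2⟩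
        refine (ContinuousLinearMap.eventually_slope_norm_lt hxA ?_).frequently
        exact (mul_le_mul_of_nonneg_right hA (norm_nonneg _)).trans_lt hr)
      t ⟨hs.2, le_rfl⟩
  have hcont : ContinuousWithinAt (fun s => Real.exp (c * (t - s)) * ‖x s‖) (Ioc t₀ t) t₀ :=
    (by fun_prop : Continuous fun s => Real.exp (c * (t - s))).continuousWithinAt.mul
      ((hxc t₀ ⟨le_rfl, ht₀.le.trans ht.2⟩).mono (Ioc_subset_Icc_self.trans
        (Icc_subset_Icc le_rfl ht.2))).norm
  exact ContinuousWithinAt.closure_le (f := fun _ => ‖x t‖)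
    (g := fun s => Real.exp (c * (t - s)) * ‖x s‖) (by simp [closure_Ioc ht₀.ne, ht₀.le])
    continuousWithinAt_const hcont hs

end Gronwall

namespace IsNorm

variable {n : ℕ} {N : (Fin n → ℝ) → ℝ}

theorem map_zero (hN : IsNorm N) : N 0 = 0 := by
  simpa using hN.2.1 0 0

theorem map_neg (hN : IsNorm N) (v : Fin n → ℝ) : N (-v) = N v := by
  simpa using hN.2.1 (-1) v

end IsNorm

-- `Fin n → ℝ` carries the sup norm; this copy of it carries `N` instead.
def WithNorm {n : ℕ} (_N : (Fin n → ℝ) → ℝ) : Type := Fin n → ℝ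

namespace WithNorm

variable {n : ℕ} {N : (Fin n → ℝ) → ℝ}

instance : AddCommGroup (WithNorm N) := inferInstanceAs (AddCommGroup (Fin n → ℝ))

instance : Module ℝ (WithNorm N) := inferInstanceAs (Module ℝ (Fin n → ℝ))

instance : FiniteDimensional ℝ (WithNorm N) := inferInstanceAs (FiniteDimensional ℝ (Fin n → ℝ))

variable [hN : Fact (IsNorm N)]

noncomputable instance : NormedAddCommGroup (WithNorm N) :=
  AddGroupNorm.toNormedAddCommGroup
    { toFun := N
      map_zero' := hN.out.map_zero
      add_le' := hN.out.1
      neg' := hN.out.map_neg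
      eq_zero_of_map_eq_zero' := hN.out.2.2 }

instance : NormedSpace ℝ (WithNorm N) where
  norm_smul_le a v := (hN.out.2.1 a v).le

variable (N) in
def linearEquiv : (Fin n → ℝ) ≃ₗ[ℝ] WithNorm N := LinearEquiv.refl ℝ (Fin n → ℝ)

variable (N) in
noncomputable def equiv : (Fin n → ℝ) ≃L[ℝ] WithNorm N :=
  (linearEquiv N).toContinuousLinearEquiv

variable (N) in
noncomputable def toCLM (A : Matrix (Fin n) (Fin n) ℝ) : WithNorm N →L[ℝ] WithNorm N :=
  LinearMap.toContinuousLinearMap ((linearEquiv N).conj (Matrix.toLin' A))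

theorem toCLM_one_add_smul (A : Matrix (Fin n) (Fin n) ℝ) (h : ℝ) :
    toCLM N (1 + h • A) = 1 + h • toCLM N A := by
  ext v
  simp [toCLM]

theorem opNorm_eq_norm_toCLM (A : Matrix (Fin n) (Fin n) ℝ) : opNorm N A = ‖toCLM N A‖ := by
  have hsphere : Metric.sphere (0 : WithNorm N) 1 = {v | N v = 1} := by
    ext v
    exact mem_sphere_zero_iff_norm
  rw [← ContinuousLinearMap.sSup_sphere_eq_norm, hsphere]
  rfl

theorem logNorm_eq_logNorm_toCLM (A : Matrix (Fin n) (Fin n) ℝ) :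
    logNorm N A = (toCLM N A).logNorm := by
  simp only [logNorm, ContinuousLinearMap.logNorm, opNorm_eq_norm_toCLM, toCLM_one_add_smul]

end WithNorm

theorem stmt0_general {n : ℕ} (N : (Fin n → ℝ) → ℝ) (hN : IsNorm N)
    (Ω : Set (Matrix (Fin n) (Fin n) ℝ)) (c : ℝ)
    (hμ : ∀ M ∈ Ω, logNorm N M ≤ c)
    (t₀ T : ℝ) (x : ℝ → Fin n → ℝ)
    (hxc : ContinuousOn x (Icc t₀ T))
    (hxd : ∀ t ∈ Ioo t₀ T, ∃ M ∈ Ω, HasDerivAt x (M.mulVec (x t)) t) :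
    ∀ t ∈ Icc t₀ T, N (x t) ≤ Real.exp (c * (t - t₀)) * N (x t₀) := by
  have : Fact (IsNorm N) := ⟨hN⟩
  refine norm_le_exp_mul_of_hasDerivAt_of_logNorm_le (x := fun t => WithNorm.equiv N (x t))
    ((WithNorm.equiv N).continuous.comp_continuousOn hxc) fun t ht => ?_
  obtain ⟨M, hM, hxM⟩ := hxd t ht
  exact ⟨WithNorm.toCLM N M, WithNorm.logNorm_eq_logNorm_toCLM (N := N) M ▸ hμ M hM,
    (WithNorm.equiv N).hasFDerivAt.comp_hasDerivAt t hxM⟩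

theorem stmt0 {n : ℕ} (N : (Fin n → ℝ) → ℝ) (hN : IsNorm N)
    (Ω : Set (Matrix (Fin n) (Fin n) ℝ)) (c : ℝ)
    (hμ : ∀ M ∈ Ω, logNorm N M ≤ c)
    (t₀ T : ℝ) (ht : t₀ ≤ T) (x : ℝ → Fin n → ℝ)
    (hxc : ContinuousOn x (Icc t₀ T))
    (hxd : ∀ t ∈ Ioo t₀ T, ∃ M ∈ Ω, HasDerivAt x (M.mulVec (x t)) t) :
    ∀ t ∈ Icc t₀ T, N (x t) ≤ Real.exp (c * (t - t₀)) * N (x t₀) :=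
  stmt0_general N hN Ω c hμ t₀ T x hxc hxd
end

section
/- Let f : ℝⁿ → ℝᵐ be differentiable, let X ⊆ ℝⁿ be convex, and let 𝒥 ⊆ ℝᵐˣⁿ be a set of matrices such that Df(x) ∈ 𝒥 for every x ∈ X, where Df(x) denotes the Jacobian matrix of f at x. Then for every x, x' ∈ X, the vector f(x) − f(x') belongs to the set {J(x − x') : J ∈ closure(convexHull(𝒥))}. -/
open Filter Topology Set Matrix

/-!
Along the segment, `h t = f (x' + t • (x - x'))` has derivative `Df(x' + t • (x - x')) (x - x')`.
If `y = h 1 - h 0` lay outside the convex hull `K` of these derivatives, a functional `ℓ` properly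
separating `y` from `K` (`ℓ y ≤ ℓ` on `K`, strictly somewhere) would make
`t ↦ ℓ (h t) - t * ℓ y` monotone with equal values at `0` and `1`, hence constant, so `ℓ = ℓ y`
on all of `K`. Proper separation of a point from a possibly non-closed convex set holds in finite
dimension: separate weakly, and if the functional vanishes on the set, recurse into its kernel.
-/

/-- The Jacobian matrix of `f : ℝⁿ → ℝᵐ` at `x`: `(Df(x))_{ij} = ∂f_i/∂x_j(x)`. -/
noncomputable def jacMatrix {n m : ℕ} (f : (Fin n → ℝ) → (Fin m → ℝ)) (x : Fin n → ℝ) :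
    Matrix (Fin m) (Fin n) ℝ :=
  fun i j => fderiv ℝ f x (Pi.single j 1) i

section MeanValueInclusion

variable {E F : Type*} [NormedAddCommGroup E] [NormedSpace ℝ E]
  [NormedAddCommGroup F] [NormedSpace ℝ F] [FiniteDimensional ℝ F]

theorem Convex.exists_ne_zero_nonneg_of_zero_notMem {K : Set F} (hK : Convex ℝ K)
    (hne : K.Nonempty) (h0 : (0 : F) ∉ K) :
    ∃ ℓ : StrongDual ℝ F, ℓ ≠ 0 ∧ ∀ b ∈ K, 0 ≤ ℓ b := by
  by_cases hint : (interior K).Nonempty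
  · obtain ⟨f, hf, hfK⟩ := geometric_hahn_banach_of_nonempty_interior_point hK
      (fun h => h0 (interior_subset h)) hint
    exact ⟨-f, neg_ne_zero.2 hf, fun b hb => by simpa using hfK b hb⟩
  · -- `K` lies in a proper affine subspace, on which a nonzero functional is constant.
    obtain ⟨p, hp⟩ := hne
    have hdir : (affineSpan ℝ K).direction ≠ ⊤ := by
      rw [Ne, AffineSubspace.direction_eq_top_iff_of_nonempty
        ((affineSpan_nonempty ℝ).2 ⟨p, hp⟩), ← hK.interior_nonempty_iff_affineSpan_eq_top]
      exact hint
    obtain ⟨f, hf, hker⟩ := (affineSpan ℝ K).direction.exists_le_ker_of_lt_top hdir.lt_top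
    have hconst : ∀ b ∈ K, f b = f p := fun b hb => by
      rw [← sub_eq_zero, ← map_sub]
      exact hker (AffineSubspace.vsub_mem_direction (subset_affineSpan ℝ K hb)
        (subset_affineSpan ℝ K hp))
    have hf' : LinearMap.toContinuousLinearMap f ≠ 0 := by simpa using hf
    rcases le_total 0 (f p) with hfp | hfp
    · exact ⟨_, hf', fun b hb => by simpa [hconst b hb] using hfp⟩
    · exact ⟨-_, neg_ne_zero.2 hf', fun b hb => by simpa [hconst b hb] using hfp⟩

theorem Convex.exists_nonneg_pos_of_zero_notMem {K : Set F} (hK : Convex ℝ K)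
    (hne : K.Nonempty) (h0 : (0 : F) ∉ K) :
    ∃ ℓ : StrongDual ℝ F, (∀ b ∈ K, 0 ≤ ℓ b) ∧ ∃ b ∈ K, 0 < ℓ b := by
  induction hd : Module.finrank ℝ F using Nat.strong_induction_on generalizing F with
  | _ d ih =>
  obtain ⟨ℓ, hℓ, hℓK⟩ := hK.exists_ne_zero_nonneg_of_zero_notMem hne h0
  by_cases hpos : ∃ b ∈ K, 0 < ℓ b
  · exact ⟨ℓ, hℓK, hpos⟩
  push Not at hpos
  set W : Submodule ℝ F := LinearMap.ker (ℓ : F →ₗ[ℝ] ℝ)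
  have hKW : K ⊆ W := fun b hb => le_antisymm (hpos b hb) (hℓK b hb)
  have hW : Module.finrank ℝ W < d := by
    refine hd ▸ Submodule.finrank_lt fun htop => hℓ ?_
    ext v
    exact (htop ▸ Submodule.mem_top : v ∈ W)
  obtain ⟨p, hp⟩ := hne
  obtain ⟨ℓ', hℓ'K, b, hb, hℓ'b⟩ := ih _ hW (K := W.subtype ⁻¹' K) (hK.linear_preimage _)
    ⟨⟨p, hKW hp⟩, hp⟩ (by simpa using h0) rfl
  obtain ⟨g, hg, -⟩ := exists_extension_norm_eq W ℓ'
  refine ⟨g, fun c hc => ?_, b, hb, by rwa [hg]⟩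
  rw [show c = ((⟨c, hKW hc⟩ : W) : F) from rfl, hg]
  exact hℓ'K _ hc

theorem eqOn_zero_of_hasDerivAt_nonneg_of_eq {φ φ' : ℝ → ℝ} {a b : ℝ} (hab : a < b)
    (hφ : ∀ t ∈ Icc a b, HasDerivAt φ (φ' t) t) (hφ' : ∀ t ∈ Icc a b, 0 ≤ φ' t)
    (hφab : φ a = φ b) : EqOn φ' 0 (Icc a b) := by
  have hmono : MonotoneOn φ (Icc a b) :=
    monotoneOn_of_hasDerivWithinAt_nonneg (convex_Icc a b)
      (fun t ht => (hφ t ht).continuousAt.continuousWithinAt)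
      (fun t ht => (hφ t (interior_subset ht)).hasDerivWithinAt)
      (fun t ht => hφ' t (interior_subset ht))
  have hconst : ∀ t ∈ Icc a b, φ t = φ a := fun t ht =>
    le_antisymm (hφab ▸ hmono ht (right_mem_Icc.2 hab.le) ht.2)
      (hmono (left_mem_Icc.2 hab.le) ht ht.1)
  intro t ht
  exact (uniqueDiffOn_Icc hab t ht).eq_deriv _ (hφ t ht).hasDerivWithinAt
    ((hasDerivWithinAt_const t _ (φ a)).congr hconst (hconst t ht))

theorem sub_mem_convexHull_image_of_hasDerivAt {h h' : ℝ → F}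
    (hh : ∀ t ∈ Icc (0 : ℝ) 1, HasDerivAt h (h' t) t) :
    h 1 - h 0 ∈ convexHull ℝ (h' '' Icc 0 1) := by
  set y := h 1 - h 0
  set K := convexHull ℝ (h' '' Icc 0 1)
  by_contra hy
  obtain ⟨ℓ, hℓK, b, hb, hℓb⟩ :=
    ((convex_convexHull ℝ _).translate_preimage_left y).exists_nonneg_pos_of_zero_notMem
      ⟨h' 0 - y, by
        simpa using subset_convexHull ℝ _ (mem_image_of_mem h' (left_mem_Icc.2 zero_le_one))⟩
      (by simpa using hy)
  have hℓh' : ∀ t ∈ Icc (0 : ℝ) 1, ℓ (h' t) = ℓ y := by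
    have hφ' := eqOn_zero_of_hasDerivAt_nonneg_of_eq zero_lt_one
      (φ := fun t => ℓ (h t) - t * ℓ y) (φ' := fun t => ℓ (h' t) - ℓ y)
      (fun t ht => ((ℓ.hasFDerivAt.comp_hasDerivAt t (hh t ht)).sub
        ((hasDerivAt_id' t).mul_const (ℓ y))).congr_deriv (by simp))
      (fun t ht => by
        simpa using hℓK (h' t - y) (by simpa using subset_convexHull ℝ _ (mem_image_of_mem h' ht)))
      (by simp [y])
    exact fun t ht => sub_eq_zero.1 (hφ' ht)
  have hKℓ : K ⊆ {c | ℓ c ≤ ℓ y} :=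
    convexHull_min (by rintro _ ⟨t, ht, rfl⟩; exact (hℓh' t ht).le)
      (convex_halfSpace_le ℓ.toLinearMap.isLinear _)
  have hby := hKℓ hb
  simp only [mem_ofPred_eq, map_add] at hby
  linarith

theorem Convex.sub_mem_convexHull_image_fderiv {f : E → F} {s : Set E} (hs : Convex ℝ s)
    (hf : ∀ z ∈ s, DifferentiableAt ℝ f z) {x y : E} (hx : x ∈ s) (hy : y ∈ s) :
    f x - f y ∈ convexHull ℝ ((fun z => fderiv ℝ f z (x - y)) '' s) := by
  have hseg : ∀ t ∈ Icc (0 : ℝ) 1, y + t • (x - y) ∈ s := fun t ht =>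
    hs.add_smul_sub_mem hy hx ht
  have hmvt := sub_mem_convexHull_image_of_hasDerivAt (h := fun t => f (y + t • (x - y)))
    (h' := fun t => fderiv ℝ f (y + t • (x - y)) (x - y)) fun t ht =>
      ((hf _ (hseg t ht)).hasFDerivAt.comp_hasDerivAt t
        (((hasDerivAt_id' t).smul_const (x - y)).const_add y)).congr_deriv (by simp)
  simp only [one_smul, zero_smul, add_zero, add_sub_cancel] at hmvt
  refine convexHull_mono ?_ hmvt
  rintro _ ⟨t, ht, rfl⟩
  exact mem_image_of_mem _ (hseg t ht)

end MeanValueInclusion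

theorem jacMatrix_mulVec {n m : ℕ} (f : (Fin n → ℝ) → (Fin m → ℝ)) (x v : Fin n → ℝ) :
    jacMatrix f x *ᵥ v = fderiv ℝ f x v :=
  LinearMap.toMatrix'_mulVec (fderiv ℝ f x : (Fin n → ℝ) →ₗ[ℝ] Fin m → ℝ) v

theorem stmt2 {n m : ℕ} (f : (Fin n → ℝ) → (Fin m → ℝ)) (hf : Differentiable ℝ f)
    (X : Set (Fin n → ℝ)) (hX : Convex ℝ X)
    (𝒥 : Set (Matrix (Fin m) (Fin n) ℝ))
    (h𝒥 : ∀ x ∈ X, jacMatrix f x ∈ 𝒥)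
    (x x' : Fin n → ℝ) (hx : x ∈ X) (hx' : x' ∈ X) :
    f x - f x' ∈
      (fun J : Matrix (Fin m) (Fin n) ℝ => J.mulVec (x - x')) '' closure (convexHull ℝ 𝒥) := by
  have hlin : IsLinearMap ℝ fun J : Matrix (Fin m) (Fin n) ℝ => J *ᵥ (x - x') :=
    ⟨fun A B => add_mulVec A B _, fun c A => smul_mulVec c A _⟩
  have hderiv : (fun z => fderiv ℝ f z (x - x')) '' X ⊆ (fun J => J *ᵥ (x - x')) '' 𝒥 := by
    rintro _ ⟨z, hz, rfl⟩
    exact ⟨_, h𝒥 z hz, jacMatrix_mulVec f z _⟩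
  have hmvt : f x - f x' ∈ (fun J => J *ᵥ (x - x')) '' convexHull ℝ 𝒥 :=
    hlin.image_convexHull 𝒥 ▸
      convexHull_mono hderiv (hX.sub_mem_convexHull_image_fderiv (fun z _ => hf z) hx hx')
  exact image_mono subset_closure hmvt
end

section
/- Let f : ℝⁿ → ℝᵐ be differentiable, let X ⊆ ℝⁿ, and fix x' ∈ X. Let ℳ ⊆ ℝᵐˣⁿ be a set of matrices such that the mixed Jacobian matrix M_{x'}f(x, s) belongs to ℳ for every x ∈ X and every s ∈ [0,1]ⁿ. Then for every x ∈ X, the vector f(x) − f(x') belongs to the set {M(x − x') : M ∈ closure(convexHull(ℳ))}. -/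
open Filter Topology Set Matrix Pointwise

/-- The mixed Jacobian matrix `M_{x'}f(x,s)`, whose `(i,j)` entry is
`∂f_i/∂x_j(x₁, …, x_{j-1}, s_j x_j + (1-s_j) x'_j, x'_{j+1}, …, x'_n)`. -/
noncomputable def mixedJac {n m : ℕ} (f : (Fin n → ℝ) → (Fin m → ℝ)) (x' x s : Fin n → ℝ) :
    Matrix (Fin m) (Fin n) ℝ :=
  fun i j =>
    fderiv ℝ f
      (fun k => if k < j then x k else if k = j then s j * x j + (1 - s j) * x' j else x' k)
      (Pi.single j 1) i

/-!
Walk from `x'` to `x` along the staircase path that changes one coordinate at a time. By the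
mean value theorem, applied to every continuous linear functional and combined with
Hahn–Banach separation, the increment of `f` along the `j`-th leg is `(x j - x' j)` times a
point `u j` of the closed convex hull of the `j`-th columns of the mixed Jacobians. The matrix
with columns `u j` lies in the closed convex hull of the product of the column sets, which the
mixed Jacobians map into `ℳ`.
-/

theorem slope_mem_closure_convexHull_image_of_hasDerivAt {E : Type*} [NormedAddCommGroup E]
    [NormedSpace ℝ E] {g g' : ℝ → E} {a b : ℝ} (hab : a < b) (hgc : ContinuousOn g (Icc a b))
    (hg : ∀ t ∈ Ioo a b, HasDerivAt g (g' t) t) :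
    slope g a b ∈ closure (convexHull ℝ (g' '' Ioo a b)) := by
  by_contra h
  obtain ⟨L, u, hLs, hLx⟩ :=
    geometric_hahn_banach_closed_point (convex_convexHull ℝ _).closure isClosed_closure h
  obtain ⟨c, hc, hLc⟩ := exists_hasDerivAt_eq_slope (L ∘ g) (L ∘ g') hab
    (L.continuous.comp_continuousOn hgc) fun t ht => L.hasFDerivAt.comp_hasDerivAt t (hg t ht)
  have hLc' : L (g' c) = L (slope g a b) := by
    simp only [Function.comp_apply] at hLc
    rw [hLc, slope_def_module, map_smul, map_sub, smul_eq_mul, div_eq_inv_mul]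
  have := hLs _ (subset_closure (subset_convexHull ℝ _ ⟨c, hc, rfl⟩))
  linarith

theorem Matrix.mem_closure_convexHull_of_columns_mem {ι κ : Type*} [Fintype ι] [Fintype κ]
    {ℳ : Set (Matrix κ ι ℝ)} {A : ι → Set (κ → ℝ)} (hA : ∀ v ∈ pi univ A, (Matrix.of v)ᵀ ∈ ℳ)
    {u : ι → κ → ℝ} (hu : ∀ j, u j ∈ closure (convexHull ℝ (A j))) :
    (Matrix.of u)ᵀ ∈ closure (convexHull ℝ ℳ) := by
  set T : (ι → κ → ℝ) →ₗ[ℝ] Matrix κ ι ℝ :=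
    (Matrix.transposeLinearEquiv ι κ ℝ ℝ).toLinearMap ∘ₗ (Matrix.ofLinearEquiv ℝ).toLinearMap
  have hu' : u ∈ closure (convexHull ℝ (pi univ A)) := by
    rw [convexHull_pi, closure_pi_set]
    exact fun j _ => hu j
  have hsub : T '' pi univ A ⊆ ℳ := image_subset_iff.2 hA
  have hTu : T u ∈ closure (T '' convexHull ℝ (pi univ A)) :=
    image_closure_subset_closure_image T.continuous_of_finiteDimensional ⟨u, hu', rfl⟩
  rw [T.image_convexHull] at hTu
  exact closure_mono (convexHull_mono hsub) hTu

section MixedPoint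

variable {n : ℕ} (x' x : Fin n → ℝ)

/-- Column `j` of `mixedJac f x' x s` is evaluated at `mixedPoint x' x j (s j)`; the points at
`t = 0` and `t = 1` are consecutive corners of the staircase path from `x'` to `x`. -/
def mixedPoint (j : Fin n) (t : ℝ) : Fin n → ℝ :=
  fun k => if k < j then x k else if k = j then t * x j + (1 - t) * x' j else x' k

theorem mixedJac_apply {m : ℕ} (f : (Fin n → ℝ) → (Fin m → ℝ)) (s : Fin n → ℝ) (i : Fin m)
    (j : Fin n) : mixedJac f x' x s i j = fderiv ℝ f (mixedPoint x' x j (s j)) (Pi.single j 1) i :=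
  rfl

theorem hasDerivAt_mixedPoint (j : Fin n) (t : ℝ) :
    HasDerivAt (mixedPoint x' x j) ((x j - x' j) • Pi.single j 1) t := by
  refine hasDerivAt_pi.2 fun k => ?_
  rcases lt_trichotomy k j with hk | rfl | hk
  · simpa [mixedPoint, hk, hk.ne] using hasDerivAt_const t (x k)
  · convert ((hasDerivAt_id t).mul_const (x k - x' k)).const_add (x' k) using 1
    · funext s
      simp only [mixedPoint, lt_self_iff_false, if_false, if_true, id]
      ring
    · simp
  · simpa [mixedPoint, hk.ne', hk.not_gt] using hasDerivAt_const t (x' k)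

theorem sum_sub_mixedPoint {E : Type*} [AddCommGroup E] (g : (Fin n → ℝ) → E) :
    ∑ j, (g (mixedPoint x' x j 1) - g (mixedPoint x' x j 0)) = g x - g x' := by
  set P : ℕ → Fin n → ℝ := fun a k => if (k : ℕ) < a then x k else x' k
  have hcorner : ∀ (j : Fin n) (a : ℕ) (t : ℝ), (t = 0 ∧ a = j ∨ t = 1 ∧ a = j + 1) →
      mixedPoint x' x j t = P a := by
    rintro j a t h
    funext k
    rcases lt_trichotomy k j with hk | rfl | hk
    · have : (k : ℕ) < j := hk
      simp only [mixedPoint, P, hk, if_true]; rw [if_pos (by omega)]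
    · rcases h with ⟨rfl, rfl⟩ | ⟨rfl, rfl⟩ <;> simp [mixedPoint, P]
    · have : (j : ℕ) < k := hk
      simp only [mixedPoint, P, hk.not_gt, hk.ne', if_false]; rw [if_neg (by omega)]
  calc ∑ j : Fin n, (g (mixedPoint x' x j 1) - g (mixedPoint x' x j 0))
      = ∑ a ∈ Finset.range n, (g (P (a + 1)) - g (P a)) := by
        rw [← Fin.sum_univ_eq_sum_range (fun a => g (P (a + 1)) - g (P a))]
        simp only [hcorner _ _ 0 (.inl ⟨rfl, rfl⟩), hcorner _ _ 1 (.inr ⟨rfl, rfl⟩)]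
    _ = g x - g x' := by
        rw [Finset.sum_range_sub (fun a => g (P a))]
        simp [P]

end MixedPoint

theorem sub_mem_smul_closure_convexHull_fderiv_mixedPoint {n : ℕ} {F : Type*}
    [NormedAddCommGroup F] [NormedSpace ℝ F] {f : (Fin n → ℝ) → F} (hf : Differentiable ℝ f)
    (x' x : Fin n → ℝ) (j : Fin n) :
    f (mixedPoint x' x j 1) - f (mixedPoint x' x j 0) ∈ (x j - x' j) •
      closure (convexHull ℝ ((fun t => fderiv ℝ f (mixedPoint x' x j t) (Pi.single j 1)) ''
        Icc 0 1)) := by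
  set column := fun t => fderiv ℝ f (mixedPoint x' x j t) (Pi.single j 1)
  have hderiv : ∀ t, HasDerivAt (f ∘ mixedPoint x' x j) ((x j - x' j) • column t) t := fun t => by
    simpa only [column, map_smul] using
      (hf _).hasFDerivAt.comp_hasDerivAt t (hasDerivAt_mixedPoint x' x j t)
  have hslope := slope_mem_closure_convexHull_image_of_hasDerivAt zero_lt_one
    (fun t _ => (hderiv t).continuousAt.continuousWithinAt) fun t _ => hderiv t
  have himage :
      (fun t => (x j - x' j) • column t) '' Ioo 0 1 ⊆ (x j - x' j) • column '' Icc 0 1 := by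
    rw [← image_smul, ← image_comp]
    exact image_mono Ioo_subset_Icc_self
  rw [← closure_smul₀, ← convexHull_smul]
  simpa [slope_def_module] using closure_mono (convexHull_mono himage) hslope

theorem stmt3_general {n m : ℕ} (f : (Fin n → ℝ) → (Fin m → ℝ)) (hf : Differentiable ℝ f)
    (X : Set (Fin n → ℝ)) (x' : Fin n → ℝ)
    (ℳ : Set (Matrix (Fin m) (Fin n) ℝ))
    (hℳ : ∀ x ∈ X, ∀ s : Fin n → ℝ, (∀ j, s j ∈ Icc (0:ℝ) 1) → mixedJac f x' x s ∈ ℳ)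
    (x : Fin n → ℝ) (hx : x ∈ X) :
    f x - f x' ∈
      (fun M : Matrix (Fin m) (Fin n) ℝ => M.mulVec (x - x')) '' closure (convexHull ℝ ℳ) := by
  set column := fun j t => fderiv ℝ f (mixedPoint x' x j t) (Pi.single j 1)
  choose u hu hdu using fun j => mem_smul_set.1 <|
    sub_mem_smul_closure_convexHull_fderiv_mixedPoint hf x' x j
  have hcolumns : ∀ v ∈ pi univ fun j => column j '' Icc 0 1, (Matrix.of v)ᵀ ∈ ℳ := by
    intro v hv
    choose s hs hsv using fun j => hv j (mem_univ j)
    convert hℳ x hx s hs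
    ext i j
    rw [mixedJac_apply]
    exact (congrFun (hsv j) i).symm
  refine ⟨_, Matrix.mem_closure_convexHull_of_columns_mem hcolumns hu, ?_⟩
  rw [← sum_sub_mixedPoint x' x f, ← Finset.sum_congr rfl fun j _ => hdu j]
  ext i
  simp [Matrix.mulVec, dotProduct, Finset.sum_apply, mul_comm]

theorem stmt3 {n m : ℕ} (f : (Fin n → ℝ) → (Fin m → ℝ)) (hf : Differentiable ℝ f)
    (X : Set (Fin n → ℝ)) (x' : Fin n → ℝ) (hx' : x' ∈ X)
    (ℳ : Set (Matrix (Fin m) (Fin n) ℝ))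
    (hℳ : ∀ x ∈ X, ∀ s : Fin n → ℝ, (∀ j, s j ∈ Icc (0:ℝ) 1) → mixedJac f x' x s ∈ ℳ)
    (x : Fin n → ℝ) (hx : x ∈ X) :
    f x - f x' ∈
      (fun M : Matrix (Fin m) (Fin n) ℝ => M.mulVec (x - x')) '' closure (convexHull ℝ ℳ) :=
  stmt3_general f hf X x' ℳ hℳ x hx
end

section
/- Let f : ℝⁿ → ℝᵐ be differentiable, let x, x' ∈ ℝⁿ, and let ℓ ∈ ℝᵐ. Then there exists s ∈ (0,1)ⁿ such that ℓᵀ(f(x) − f(x')) = ℓᵀ M_{x'}f(x, s) (x − x'), i.e., ℓᵀ(f(x) − f(x')) = Σ_{j=1}^{n} ℓᵀ (∂f/∂x_j)(x₁, …, x_{j−1}, s_j x_j + (1 − s_j) x'_j, x'_{j+1}, …, x'_n) (x_j − x'_j). -/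
/-!
Pass from `x'` to `x` one coordinate at a time, through the points `stairPoint x x' J` that take
their first `J` coordinates from `x` and the others from `x'`. The `j`-th leg is a segment parallel
to the `j`-th axis, and the mean value theorem for `t ↦ ℓ ⬝ᵥ f (·)` on it gives `s j ∈ (0, 1)`
at which the `j`-th column of the mixed Jacobian is evaluated. Summing the legs telescopes
to `ℓ ⬝ᵥ (f x - f x')`.
-/

open Filter Topology Set Matrix

theorem ContinuousLinearMap.exists_mem_Ioo_map_sub_eq_map_fderiv
    {E F : Type*} [NormedAddCommGroup E] [NormedSpace ℝ E]
    [NormedAddCommGroup F] [NormedSpace ℝ F] {f : E → F} (hf : Differentiable ℝ f)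
    (L : F →L[ℝ] ℝ) (a b : E) :
    ∃ c ∈ Ioo (0 : ℝ) 1, L (f b - f a) = L (fderiv ℝ f (a + c • (b - a)) (b - a)) := by
  have hderiv : ∀ t : ℝ, HasDerivAt (fun t : ℝ => L (f (a + t • (b - a))))
      (L (fderiv ℝ f (a + t • (b - a)) (b - a))) t := fun t =>
    L.hasFDerivAt.comp_hasDerivAt t <| (hf _).hasFDerivAt.comp_hasDerivAt t <|
      ((hasDerivAt_id t).smul_const (b - a)).const_add a |>.congr_deriv (one_smul ℝ _)
  obtain ⟨c, hc, hslope⟩ := exists_hasDerivAt_eq_slope _ _ zero_lt_one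
    (fun t _ => (hderiv t).continuousAt.continuousWithinAt) (fun t _ => hderiv t)
  refine ⟨c, hc, ?_⟩
  rw [hslope, map_sub]
  simp

section stairPoint

variable {n : ℕ} {α : Type*} (x x' : Fin n → α)

def stairPoint (J : ℕ) : Fin n → α := fun k => if (k : ℕ) < J then x k else x' k

@[simp] theorem stairPoint_zero : stairPoint x x' 0 = x' := by
  ext k; simp [stairPoint]

@[simp] theorem stairPoint_self : stairPoint x x' n = x := by
  ext k; simp [stairPoint, k.isLt]

theorem stairPoint_succ_sub [AddGroup α] (j : Fin n) :
    stairPoint x x' (j + 1) - stairPoint x x' j = Pi.single j (x j - x' j) := by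
  ext k
  rcases lt_trichotomy k j with h | rfl | h
  · have hkj : (k : ℕ) < j := h
    simp [stairPoint, h.ne, hkj, hkj.trans j.val.lt_succ_self]
  · simp [stairPoint]
  · have hjk : (j : ℕ) < k := h
    simp [stairPoint, h.ne', hjk.not_gt, Nat.not_lt.mpr hjk]

theorem stairPoint_add_smul_single [CommRing α] (j : Fin n) (t : α) :
    stairPoint x x' j + t • Pi.single j (x j - x' j) =
      fun k => if k < j then x k else if k = j then t * x j + (1 - t) * x' j else x' k := by
  ext k
  rcases lt_trichotomy k j with h | rfl | h
  · have hkj : (k : ℕ) < j := h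
    simp [stairPoint, h, h.ne, hkj]
  · simp only [Pi.add_apply, stairPoint, lt_self_iff_false, ↓reduceIte, Pi.smul_apply,
      Pi.single_eq_same, smul_eq_mul]
    ring
  · have hjk : (j : ℕ) < k := h
    simp [stairPoint, h.ne', h.not_gt, hjk.not_gt]

theorem sum_sub_stairPoint {G : Type*} [AddCommGroup G] (F : (Fin n → α) → G) :
    ∑ j : Fin n, (F (stairPoint x x' (j + 1)) - F (stairPoint x x' j)) = F x - F x' := by
  rw [Fin.sum_univ_eq_sum_range (fun J => F (stairPoint x x' (J + 1)) - F (stairPoint x x' J)),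
    Finset.sum_range_sub (fun J => F (stairPoint x x' J)), stairPoint_self, stairPoint_zero]

end stairPoint

theorem vecMul_mixedJac_mul {n m : ℕ} (f : (Fin n → ℝ) → (Fin m → ℝ)) (x x' s : Fin n → ℝ)
    (ℓ : Fin m → ℝ) (j : Fin n) :
    (ℓ ᵥ* mixedJac f x' x s) j * (x j - x' j) =
      ℓ ⬝ᵥ fderiv ℝ f (stairPoint x x' j + s j • Pi.single j (x j - x' j))
        (Pi.single j (x j - x' j)) := by
  have hsingle : Pi.single j (x j - x' j) = (x j - x' j) • Pi.single j (1 : ℝ) := by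
    rw [← Pi.single_smul, smul_eq_mul, mul_one]
  rw [stairPoint_add_smul_single, hsingle, map_smul, dotProduct_smul, smul_eq_mul, mul_comm]
  rfl

theorem stmt4 {n m : ℕ} (f : (Fin n → ℝ) → (Fin m → ℝ)) (hf : Differentiable ℝ f)
    (x x' : Fin n → ℝ) (ℓ : Fin m → ℝ) :
    ∃ s : Fin n → ℝ, (∀ j, s j ∈ Ioo (0:ℝ) 1) ∧
      ℓ ⬝ᵥ (f x - f x') = ℓ ⬝ᵥ (mixedJac f x' x s).mulVec (x - x') := by
  set L := (dotProductBilin ℝ ℝ ℓ).toContinuousLinearMap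
  have hleg (j : Fin n) := L.exists_mem_Ioo_map_sub_eq_map_fderiv hf
    (stairPoint x x' j) (stairPoint x x' (j + 1))
  choose s hs hstep using hleg
  refine ⟨s, hs, ?_⟩
  calc ℓ ⬝ᵥ (f x - f x')
      = ∑ j : Fin n, L (f (stairPoint x x' (j + 1)) - f (stairPoint x x' j)) := by
        rw [← map_sum, sum_sub_stairPoint]; rfl
    _ = ∑ j, (ℓ ᵥ* mixedJac f x' x s) j * (x - x') j := by
        refine Finset.sum_congr rfl fun j _ => ?_
        rw [hstep, stairPoint_succ_sub, Pi.sub_apply, vecMul_mixedJac_mul]; rfl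
    _ = ℓ ⬝ᵥ (mixedJac f x' x s).mulVec (x - x') := (dotProduct_mulVec _ _ _).symm
end

section
/- Let f : ℝⁿ → ℝⁿ be differentiable, let X = X₁ × ⋯ × Xₙ be a product of (possibly unbounded) closed intervals of ℝ, and let x' ∈ X. Then sup over x ∈ X and s ∈ [0,1]ⁿ of μ₁(M_{x'}f(x, s)) is at most sup over x ∈ X of μ₁(Df(x)), where μ₁ is the logarithmic norm induced by the ℓ₁ norm. -/
open Filter Topology Set Matrix

/-- The logarithmic norm induced by the `ℓ₁` norm:
`μ₁(A) = max_j (A_{jj} + Σ_{i ≠ j} |A_{ij}|)`. -/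
noncomputable def mu1 {n : ℕ} (A : Matrix (Fin n) (Fin n) ℝ) : ℝ :=
  ⨆ j, (A j j + ∑ i ∈ Finset.univ.erase j, |A i j|)

theorem stmt9 {n : ℕ} (f : (Fin n → ℝ) → (Fin n → ℝ)) (hf : Differentiable ℝ f)
    (Xs : Fin n → Set ℝ) (hXs : ∀ k, IsClosed (Xs k) ∧ (Xs k).OrdConnected)
    (x' : Fin n → ℝ) (hx' : ∀ k, x' k ∈ Xs k) :
    (⨆ p : {p : (Fin n → ℝ) × (Fin n → ℝ) //
        (∀ k, p.1 k ∈ Xs k) ∧ ∀ k, p.2 k ∈ Icc (0:ℝ) 1},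
        (mu1 (mixedJac f x' p.1.1 p.1.2) : EReal)) ≤
      ⨆ x : {x : Fin n → ℝ // ∀ k, x k ∈ Xs k}, (mu1 (jacMatrix f x.1) : EReal) := by
  apply iSup_le
  rintro ⟨⟨x, s⟩, hx, hs⟩
  rcases isEmpty_or_nonempty (Fin n) with hn | hn
  · have h0 : mu1 (mixedJac f x' x s) = 0 := by
      simp [mu1, Real.iSup_of_isEmpty]
    have h0' : mu1 (jacMatrix f x') = 0 := by
      simp [mu1, Real.iSup_of_isEmpty]
    calc ((mu1 (mixedJac f x' x s) : ℝ) : EReal)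
        = ((mu1 (jacMatrix f x') : ℝ) : EReal) := by rw [h0, h0']
      _ ≤ _ := le_iSup
          (fun z : {z : Fin n → ℝ // ∀ k, z k ∈ Xs k} =>
            ((mu1 (jacMatrix f z.1) : ℝ) : EReal)) ⟨x', hx'⟩
  · set g := fun j => mixedJac f x' x s j j +
      ∑ i ∈ Finset.univ.erase j, |mixedJac f x' x s i j| with hg
    obtain ⟨j, hj⟩ := Finite.exists_max g
    have hsup : mu1 (mixedJac f x' x s) ≤ g j := ciSup_le hj
    set y : Fin n → ℝ :=
      fun k => if k < j then x k else if k = j then s j * x j + (1 - s j) * x' j else x' k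
      with hy
    have hyX : ∀ k, y k ∈ Xs k := by
      intro k
      by_cases h1 : k < j
      · simpa [hy, h1] using hx k
      · by_cases h2 : k = j
        · subst h2
          have hconv : Convex ℝ (Xs k) := (hXs k).2.convex
          have := hconv (hx k) (hx' k) (a := s k) (b := 1 - s k) (hs k).1
            (by linarith [(hs k).2]) (by ring)
          simpa [hy, h1, smul_eq_mul] using this
        · simpa [hy, h1, h2] using hx' k
    have hcol : ∀ i, mixedJac f x' x s i j = jacMatrix f y i j := fun i => rfl
    have h2 : g j ≤ mu1 (jacMatrix f y) := by
      have hle := le_ciSup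
        (f := fun j' => jacMatrix f y j' j' +
          ∑ i ∈ Finset.univ.erase j', |jacMatrix f y i j'|)
        (Set.Finite.bddAbove (Set.finite_range _)) j
      simpa [hg, mu1, hcol] using hle
    calc ((mu1 (mixedJac f x' x s) : ℝ) : EReal)
        ≤ ((mu1 (jacMatrix f y) : ℝ) : EReal) := by
          exact_mod_cast hsup.trans h2
      _ ≤ _ := le_iSup
          (fun z : {z : Fin n → ℝ // ∀ k, z k ∈ Xs k} =>
            ((mu1 (jacMatrix f z.1) : ℝ) : EReal)) ⟨y, hyX⟩
end

section
/- Let f : ℝⁿ → ℝⁿ be differentiable, let X = X₁ × ⋯ × Xₙ be a product of (possibly unbounded) closed intervals of ℝ, let x' ∈ X, and let Γ be a diagonal matrix with strictly positive diagonal entries. Then sup over x ∈ X and s ∈ [0,1]ⁿ of μ_Γ(M_{x'}f(x, s)) is at most sup over x ∈ X of μ_Γ(Df(x)), where μ_Γ is the logarithmic norm induced by the weighted norm x ↦ |Γx|₁. -/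
open Filter Topology Set Matrix

/-- The logarithmic norm induced by the diagonally weighted `ℓ₁` norm `x ↦ |Γx|₁`,
where `Γ = diag(Γ₁, …, Γₙ)` has positive diagonal entries:
`μ_Γ(A) = max_j (A_{jj} + Σ_{i ≠ j} (Γ_i/Γ_j) |A_{ij}|)`. -/
noncomputable def muGamma {n : ℕ} (Γ : Fin n → ℝ) (A : Matrix (Fin n) (Fin n) ℝ) : ℝ :=
  ⨆ j, (A j j + ∑ i ∈ Finset.univ.erase j, (Γ i / Γ j) * |A i j|)

theorem stmt10 {n : ℕ} (f : (Fin n → ℝ) → (Fin n → ℝ)) (hf : Differentiable ℝ f)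
    (Xs : Fin n → Set ℝ) (hXs : ∀ k, IsClosed (Xs k) ∧ (Xs k).OrdConnected)
    (x' : Fin n → ℝ) (hx' : ∀ k, x' k ∈ Xs k)
    (Γ : Fin n → ℝ) (hΓ : ∀ i, 0 < Γ i) :
    (⨆ p : {p : (Fin n → ℝ) × (Fin n → ℝ) //
        (∀ k, p.1 k ∈ Xs k) ∧ ∀ k, p.2 k ∈ Icc (0:ℝ) 1},
        (muGamma Γ (mixedJac f x' p.1.1 p.1.2) : EReal)) ≤
      ⨆ x : {x : Fin n → ℝ // ∀ k, x k ∈ Xs k}, (muGamma Γ (jacMatrix f x.1) : EReal) := by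
  apply iSup_le
  rintro ⟨⟨x, s⟩, hx, hs⟩
  rcases isEmpty_or_nonempty (Fin n) with hE | hNE
  · have h1 : muGamma Γ (mixedJac f x' x s) = 0 := by
      simp [muGamma, Real.iSup_of_isEmpty]
    have h2 : muGamma Γ (jacMatrix f x') = 0 := by
      simp [muGamma, Real.iSup_of_isEmpty]
    calc ((muGamma Γ (mixedJac f x' x s) : ℝ) : EReal)
        = ((muGamma Γ (jacMatrix f x') : ℝ) : EReal) := by rw [h1, h2]
      _ ≤ _ := le_iSup (fun z : {z : Fin n → ℝ // ∀ k, z k ∈ Xs k} =>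
          ((muGamma Γ (jacMatrix f z.1) : ℝ) : EReal)) ⟨x', hx'⟩
  · obtain ⟨j0, hj0⟩ := exists_eq_ciSup_of_finite
      (f := fun j => (mixedJac f x' x s) j j +
        ∑ i ∈ Finset.univ.erase j, (Γ i / Γ j) * |mixedJac f x' x s i j|)
    set y : Fin n → ℝ := fun k =>
      if k < j0 then x k else if k = j0 then s j0 * x j0 + (1 - s j0) * x' j0 else x' k with hy
    have hcol : ∀ i, mixedJac f x' x s i j0 = jacMatrix f y i j0 := fun i => rfl
    have hmem : ∀ k, y k ∈ Xs k := by
      intro k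
      rw [hy]
      rcases lt_trichotomy k j0 with h | h | h
      · simp only [if_pos h]; exact hx k
      · subst h
        simp only [lt_irrefl, if_false, eq_self_iff_true, if_true]
        have hs1 : 0 ≤ s k := (hs k).1
        have hs2 : s k ≤ 1 := (hs k).2
        have hmin : min (x' k) (x k) ∈ Xs k := by
          rcases min_choice (x' k) (x k) with h | h <;> rw [h]
          exacts [hx' k, hx k]
        have hmax : max (x' k) (x k) ∈ Xs k := by
          rcases max_choice (x' k) (x k) with h | h <;> rw [h]
          exacts [hx' k, hx k]
        refine (hXs k).2.out hmin hmax ⟨?_, ?_⟩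
        · nlinarith [min_le_left (x' k) (x k), min_le_right (x' k) (x k),
            mul_nonneg hs1 (sub_nonneg.mpr (min_le_right (x' k) (x k))),
            mul_nonneg (by linarith : (0:ℝ) ≤ 1 - s k)
              (sub_nonneg.mpr (min_le_left (x' k) (x k)))]
        · nlinarith [le_max_left (x' k) (x k), le_max_right (x' k) (x k),
            mul_nonneg hs1 (sub_nonneg.mpr (le_max_right (x' k) (x k))),
            mul_nonneg (by linarith : (0:ℝ) ≤ 1 - s k)
              (sub_nonneg.mpr (le_max_left (x' k) (x k)))]
      · simp only [if_neg (not_lt.mpr h.le), if_neg h.ne']; exact hx' k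
    have hle : muGamma Γ (mixedJac f x' x s) ≤ muGamma Γ (jacMatrix f y) := by
      unfold muGamma
      rw [← hj0]
      simp only [hcol]
      exact le_ciSup (f := fun j => jacMatrix f y j j + ∑ i ∈ Finset.univ.erase j, Γ i / Γ j * |jacMatrix f y i j|) (Set.Finite.bddAbove (Set.finite_range _)) j0
    calc ((muGamma Γ (mixedJac f x' x s) : ℝ) : EReal)
        ≤ ((muGamma Γ (jacMatrix f y) : ℝ) : EReal) := EReal.coe_le_coe_iff.mpr hle
      _ ≤ _ := le_iSup (fun z : {z : Fin n → ℝ // ∀ k, z k ∈ Xs k} =>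
          ((muGamma Γ (jacMatrix f z.1) : ℝ) : EReal)) ⟨y, hmem⟩
end

section
/- Consider the planar time-varying system ẋ₁ = −x₁ − arctan(x₁)x₂ + cos(2πt), ẋ₂ = −x₂. Let x' be a trajectory of this system on [0, ∞) with x'₂(0) = 0, and let x be any trajectory of this system on [0, ∞). Then |x(t) − x'(t)|₂ ≤ e^{(π/4 − 1)t} |x(0) − x'(0)|₂ for every t ≥ 0, where |·|₂ is the Euclidean norm on ℝ². -/
open Filter Topology Set Matrix

/-!
The error `e = x - x'` has squared length `V = e₁² + e₂²`. The second coordinate of every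
trajectory decays like `e^{-t}`, so `x'₂ ≡ 0` and the nonlinear terms of the two trajectories
differ by `arctan (x₁) e₂`. Since `|arctan| < π/2`, this gives `V' ≤ (π/2 - 2) V`; Grönwall's
inequality and a square root give the bound.
-/

open Real

theorem le_exp_mul_of_hasDerivAt_le {f f' : ℝ → ℝ} {a c : ℝ} (hf : ContinuousOn f (Ici a))
    (hf' : ∀ t > a, HasDerivAt f (f' t) t) (hle : ∀ t > a, f' t ≤ c * f t) :
    ∀ t ≥ a, f t ≤ exp (c * (t - a)) * f a := by
  have hg' : ∀ t > a, HasDerivAt (fun s => exp (-c * s) * f s)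
      (exp (-c * t) * (f' t - c * f t)) t := by
    intro t ht
    have hexp : HasDerivAt (fun s => exp (-c * s)) (exp (-c * t) * -c) t := by
      simpa using ((hasDerivAt_id t).const_mul (-c)).exp
    exact (hexp.mul (hf' t ht)).congr_deriv (by ring)
  have hg : AntitoneOn (fun s => exp (-c * s) * f s) (Ici a) := by
    apply antitoneOn_of_deriv_nonpos (convex_Ici a)
    · exact (continuous_const.mul continuous_id).rexp.continuousOn.mul hf
    · intro t ht
      rw [interior_Ici] at ht
      exact (hg' t ht).differentiableAt.differentiableWithinAt
    · intro t ht
      rw [interior_Ici] at ht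
      rw [(hg' t ht).deriv]
      exact mul_nonpos_of_nonneg_of_nonpos (exp_pos _).le (sub_nonpos.2 (hle t ht))
  intro t ht
  have hdecay := hg self_mem_Ici ht ht
  calc f t = exp (c * t) * (exp (-c * t) * f t) := by
        rw [← mul_assoc, ← exp_add, show c * t + -c * t = 0 by ring, exp_zero, one_mul]
    _ ≤ exp (c * t) * (exp (-c * a) * f a) := by gcongr
    _ = exp (c * (t - a)) * f a := by
        rw [← mul_assoc, ← exp_add, show c * t + -c * a = c * (t - a) by ring]

theorem eq_zero_of_hasDerivAt_const_mul {y : ℝ → ℝ} {a c : ℝ} (hy : ContinuousOn y (Ici a))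
    (hy' : ∀ t > a, HasDerivAt y (c * y t) t) (ha : y a = 0) : ∀ t ≥ a, y t = 0 := by
  have hsq := le_exp_mul_of_hasDerivAt_le (f := fun s => y s ^ 2) (c := 2 * c) (hy.pow 2)
    (fun t ht => (hy' t ht).pow 2) (fun t ht => le_of_eq (by ring))
  intro t ht
  have : y t ^ 2 ≤ 0 := by simpa [ha] using hsq t ht
  exact pow_eq_zero_iff two_ne_zero |>.1 (le_antisymm this (sq_nonneg _))

theorem hasDerivAt_sqDist {u v : ℝ → Fin 2 → ℝ} {u' v' : Fin 2 → ℝ} {t : ℝ}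
    (hu : HasDerivAt u u' t) (hv : HasDerivAt v v' t) :
    HasDerivAt (fun s => (u s 0 - v s 0) ^ 2 + (u s 1 - v s 1) ^ 2)
      (2 * (u t 0 - v t 0) * (u' 0 - v' 0) + 2 * (u t 1 - v t 1) * (u' 1 - v' 1)) t := by
  have h0 := (hasDerivAt_pi.1 hu 0).fun_sub (hasDerivAt_pi.1 hv 0)
  have h1 := (hasDerivAt_pi.1 hu 1).fun_sub (hasDerivAt_pi.1 hv 1)
  exact ((h0.fun_pow 2).fun_add (h1.fun_pow 2)).congr_deriv (by push_cast; ring)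

noncomputable def entrainField (t : ℝ) (p : Fin 2 → ℝ) : Fin 2 → ℝ :=
  ![-(p 0) - arctan (p 0) * p 1 + cos (2 * π * t), -(p 1)]

theorem entrainField_sub_inner_le (t : ℝ) (p q : Fin 2 → ℝ) (hq : q 1 = 0) :
    2 * (p 0 - q 0) * (entrainField t p 0 - entrainField t q 0)
        + 2 * (p 1 - q 1) * (entrainField t p 1 - entrainField t q 1)
      ≤ (π / 2 - 2) * ((p 0 - q 0) ^ 2 + (p 1 - q 1) ^ 2) := by
  have hlt := arctan_lt_pi_div_two (p 0)
  have hgt := neg_pi_div_two_lt_arctan (p 0)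
  simp only [entrainField, cons_val_zero, cons_val_one, hq, sub_zero]
  -- with `a = arctan (p 0)`, `u = p 0 - q 0`, `v = p 1`: the cross term `a u v` is bounded by
  -- `(π/2 - a)(u - v)² + (π/2 + a)(u + v)² ≥ 0`
  nlinarith [mul_nonneg (sub_nonneg.2 hlt.le) (sq_nonneg (p 0 - q 0 - p 1)),
    mul_nonneg (neg_le_iff_add_nonneg.1 hgt.le) (sq_nonneg (p 0 - q 0 + p 1))]

theorem stmt16
    (x x' : ℝ → Fin 2 → ℝ)
    (hx'c : ContinuousOn x' (Ici (0:ℝ)))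
    (hx'd : ∀ t > (0:ℝ), HasDerivAt x'
      ![-(x' t 0) - Real.arctan (x' t 0) * x' t 1 + Real.cos (2 * Real.pi * t), -(x' t 1)] t)
    (hx'2 : x' 0 1 = 0)
    (hxc : ContinuousOn x (Ici (0:ℝ)))
    (hxd : ∀ t > (0:ℝ), HasDerivAt x
      ![-(x t 0) - Real.arctan (x t 0) * x t 1 + Real.cos (2 * Real.pi * t), -(x t 1)] t) :
    ∀ t ≥ (0:ℝ),
      Real.sqrt ((x t 0 - x' t 0) ^ 2 + (x t 1 - x' t 1) ^ 2) ≤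
        Real.exp ((Real.pi / 4 - 1) * t) *
          Real.sqrt ((x 0 0 - x' 0 0) ^ 2 + (x 0 1 - x' 0 1) ^ 2) := by
  have hx'₁ : ∀ t ≥ (0:ℝ), x' t 1 = 0 :=
    eq_zero_of_hasDerivAt_const_mul (c := -1) ((continuous_apply 1).comp_continuousOn hx'c)
      (fun t ht => by simpa using hasDerivAt_pi.1 (hx'd t ht) 1) hx'2
  have hV := le_exp_mul_of_hasDerivAt_le (c := π / 2 - 2) (by fun_prop)
    (fun t ht => hasDerivAt_sqDist (u' := entrainField t (x t)) (v' := entrainField t (x' t))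
      (hxd t ht) (hx'd t ht))
    (fun t ht => entrainField_sub_inner_le t (x t) (x' t) (hx'₁ t ht.le))
  intro t ht
  calc sqrt ((x t 0 - x' t 0) ^ 2 + (x t 1 - x' t 1) ^ 2)
      ≤ sqrt (exp ((π / 2 - 2) * (t - 0)) * ((x 0 0 - x' 0 0) ^ 2 + (x 0 1 - x' 0 1) ^ 2)) :=
        sqrt_le_sqrt (hV t ht)
    _ = exp ((π / 4 - 1) * t) * sqrt ((x 0 0 - x' 0 0) ^ 2 + (x 0 1 - x' 0 1) ^ 2) := by
        rw [sqrt_mul (exp_pos _).le, ← exp_half]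
        ring_nf
end

section
/- Consider the planar system ẋ₁ = −x₁, ẋ₂ = −x₂ − x₁x₂, and let δ ∈ (0, 1). Let x be any trajectory of this system on [t₀, T] with x₁(t₀) ≥ −δ. Then: (i) x₁(t) ≥ −δ for every t ∈ [t₀, T] (the half-space {x ∈ ℝ² : x₁ ≥ −δ} is forward invariant); and (ii) |x(t)|₁ ≤ e^{(δ−1)(t−t₀)} |x(t₀)|₁ for every t ∈ [t₀, T], where |x|₁ = |x₁| + |x₂| is the ℓ₁ norm. In particular, since δ − 1 < 0, the origin is exponentially stable with region of attraction containing {x : x₁ ≥ −δ}. -/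
/-!
Both coordinates solve scalar linear equations `ẏ = q(t) y`: the first with `q = -1`, so
`x₁(t) = e^{-(t - t₀)} x₁(t₀)` lies between `x₁(t₀)` and `0`, hence above `-δ`; the second with
`q = -1 - x₁ ≤ δ - 1` by (i). For such an equation `(e^{-r (t - t₀)} y(t))²` is nonincreasing as
soon as `q ≤ r`, which bounds each coordinate by `e^{(δ - 1)(t - t₀)}` times its initial value.
-/

open Set Real

theorem abs_le_exp_mul_abs_of_hasDerivAt_eq_mul {y q : ℝ → ℝ} {a b r : ℝ}
    (hc : ContinuousOn y (Icc a b)) (hd : ∀ t ∈ Ioo a b, HasDerivAt y (q t * y t) t)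
    (hq : ∀ t ∈ Ioo a b, q t ≤ r) :
    ∀ t ∈ Icc a b, |y t| ≤ exp (r * (t - a)) * |y a| := by
  set g : ℝ → ℝ := fun t => (exp (-r * (t - a)) * y t) ^ 2
  have hg : AntitoneOn g (Icc a b) := by
    refine antitoneOn_of_hasDerivWithinAt_nonpos (convex_Icc a b)
      (f' := fun t => 2 * (exp (-r * (t - a)) * y t) ^ 2 * (q t - r)) (by fun_prop) ?_ ?_
    · rw [interior_Icc]
      intro t ht
      have hexp : HasDerivAt (fun t => exp (-r * (t - a))) (exp (-r * (t - a)) * -r) t := by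
        simpa using (((hasDerivAt_id t).sub_const a).const_mul (-r)).exp
      refine (((hexp.mul (hd t ht)).pow 2).congr_deriv ?_).hasDerivWithinAt
      simp only [Pi.mul_apply]
      ring
    · rw [interior_Icc]
      exact fun t ht => mul_nonpos_of_nonneg_of_nonpos (by positivity) (sub_nonpos.2 (hq t ht))
  intro t ht
  have hga : g t ≤ g a := hg (left_mem_Icc.2 (ht.1.trans ht.2)) ht ht.1
  have hscaled : |exp (-r * (t - a)) * y t| ≤ |y a| := by
    simpa [g, sq_le_sq] using hga
  calc |y t| = exp (r * (t - a)) * |exp (-r * (t - a)) * y t| := by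
        rw [abs_mul, abs_of_pos (exp_pos _), ← mul_assoc, ← exp_add]; simp
    _ ≤ exp (r * (t - a)) * |y a| := by gcongr

/-- Uniqueness for `ẏ = q y` with constant `q`: the difference with the explicit solution
vanishes at `a`, so the estimate above forces it to vanish everywhere. -/
theorem eq_exp_mul_of_hasDerivAt_eq_const_mul {y : ℝ → ℝ} {a b q : ℝ}
    (hc : ContinuousOn y (Icc a b)) (hd : ∀ t ∈ Ioo a b, HasDerivAt y (q * y t) t) :
    ∀ t ∈ Icc a b, y t = exp (q * (t - a)) * y a := by
  set z : ℝ → ℝ := fun t => y t - exp (q * (t - a)) * y a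
  have hz : ∀ t ∈ Icc a b, |z t| ≤ exp (q * (t - a)) * |z a| := by
    refine abs_le_exp_mul_abs_of_hasDerivAt_eq_mul (q := fun _ => q) (by fun_prop) ?_
      (fun _ _ => le_rfl)
    intro t ht
    have hexp : HasDerivAt (fun t => exp (q * (t - a))) (exp (q * (t - a)) * q) t := by
      simpa using (((hasDerivAt_id t).sub_const a).const_mul q).exp
    refine ((hd t ht).sub (hexp.mul_const (y a))).congr_deriv ?_
    ring
  intro t ht
  have hzt : |z t| ≤ 0 := by simpa [z] using hz t ht
  exact sub_eq_zero.1 (abs_nonpos_iff.1 hzt)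

theorem stmt17_general (δ : ℝ) (hδ : δ ∈ Ioo (0:ℝ) 1) (t₀ T : ℝ)
    (x : ℝ → Fin 2 → ℝ) (hxc : ContinuousOn x (Icc t₀ T))
    (hxd : ∀ t ∈ Ioo t₀ T, HasDerivAt x ![-(x t 0), -(x t 1) - x t 0 * x t 1] t)
    (h0 : -δ ≤ x t₀ 0) :
    (∀ t ∈ Icc t₀ T, -δ ≤ x t 0) ∧
    (∀ t ∈ Icc t₀ T,
      |x t 0| + |x t 1| ≤ Real.exp ((δ - 1) * (t - t₀)) * (|x t₀ 0| + |x t₀ 1|)) := by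
  have hc : ∀ i, ContinuousOn (fun t => x t i) (Icc t₀ T) :=
    fun i => (continuous_apply i).comp_continuousOn hxc
  have hd₀ : ∀ t ∈ Ioo t₀ T, HasDerivAt (fun s => x s 0) (-1 * x t 0) t := fun t ht => by
    simpa using hasDerivAt_pi.1 (hxd t ht) 0
  have hd₁ : ∀ t ∈ Ioo t₀ T, HasDerivAt (fun s => x s 1) ((-1 - x t 0) * x t 1) t :=
    fun t ht => (hasDerivAt_pi.1 (hxd t ht) 1).congr_deriv (by simp; ring)
  have invariant : ∀ t ∈ Icc t₀ T, -δ ≤ x t 0 := by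
    intro t ht
    have hE : exp (-1 * (t - t₀)) ≤ 1 := exp_le_one_iff.2 (by linarith [ht.1])
    have hE₀ := exp_pos (-1 * (t - t₀))
    rw [eq_exp_mul_of_hasDerivAt_eq_const_mul (hc 0) hd₀ t ht]
    rcases le_total 0 (x t₀ 0) with hpos | hneg
    · nlinarith [hδ.1]
    · nlinarith
  refine ⟨invariant, fun t ht => ?_⟩
  have decay₀ := abs_le_exp_mul_abs_of_hasDerivAt_eq_mul (r := δ - 1) (hc 0) hd₀
    (fun _ _ => by linarith [hδ.1]) t ht
  have decay₁ := abs_le_exp_mul_abs_of_hasDerivAt_eq_mul (r := δ - 1) (hc 1) hd₁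
    (fun s hs => by linarith [invariant s (Ioo_subset_Icc_self hs)]) t ht
  linarith

theorem stmt17 (δ : ℝ) (hδ : δ ∈ Ioo (0:ℝ) 1) (t₀ T : ℝ) (ht : t₀ ≤ T)
    (x : ℝ → Fin 2 → ℝ) (hxc : ContinuousOn x (Icc t₀ T))
    (hxd : ∀ t ∈ Ioo t₀ T, HasDerivAt x ![-(x t 0), -(x t 1) - x t 0 * x t 1] t)
    (h0 : -δ ≤ x t₀ 0) :
    (∀ t ∈ Icc t₀ T, -δ ≤ x t 0) ∧
    (∀ t ∈ Icc t₀ T,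
      |x t 0| + |x t 1| ≤ Real.exp ((δ - 1) * (t - t₀)) * (|x t₀ 0| + |x t₀ 1|)) :=
  stmt17_general δ hδ t₀ T x hxc hxd h0
end
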